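/- For every integer n ≥ 4, the number of cyclic permutations of length n avoiding both cyclic patterns [1243] and [1342] equals 4; that is, #Av_n([1243],[1342]) = 4. -/

import Mathlib

/-- A sequence `σ` of length `n` (with distinct values) contains the pattern `π`
of length `k` if some subsequence of `σ` is order isomorphic to `π`. -/
def ContainsPat {n k : ℕ} (σ : Fin n → Fin n) (π : Fin k → ℕ) : Prop :=
  ∃ f : Fin k → Fin n, StrictMono f ∧ ∀ i j : Fin k, π i < π j ↔ σ (f i) < σ (f j)

/-- The rotation of the sequence `σ` starting at position `r`. -/
def rotSeq {n : ℕ} (σ : Fin n → Fin n) (r : Fin n) : Fin n → Fin n :=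
  fun i => σ (i + r)

/-- The cyclic permutation `[σ]` contains the cyclic pattern `[π]` if some
rotation of `σ` contains `π` linearly. -/
def CycContains {n k : ℕ} (σ : Fin n → Fin n) (π : Fin k → ℕ) : Prop :=
  ∃ r : Fin n, ContainsPat (rotSeq σ r) π

/-- The cyclic permutation `[σ]` avoids the cyclic pattern `[π]`. -/
def CycAvoids {n k : ℕ} (σ : Fin n → Fin n) (π : Fin k → ℕ) : Prop :=
  ¬ CycContains σ π

/-- The cyclic permutation `[σ]`, i.e. the set of all rotations of `σ`. -/
def CycClass {n : ℕ} (σ : Fin n → Fin n) : Set (Fin n → Fin n) :=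
  Set.range (rotSeq σ)

/-- The set of cyclic permutations (rotation classes) of length `n` all of whose
representatives are permutations and which satisfy the (rotation-invariant)
predicate `P`. -/
def AvClasses (n : ℕ) (P : (Fin n → Fin n) → Prop) : Set (Set (Fin n → Fin n)) :=
  { C | ∃ σ : Equiv.Perm (Fin n), C = CycClass ⇑σ ∧ P ⇑σ }

/-- The cyclic descent number: the number of indices `i` (mod `n`) with
`σ i > σ (i+1)`. -/
def cdes {n : ℕ} (σ : Fin n → Fin n) : ℕ :=
  (Finset.univ.filter fun i : Fin n =>
    σ ⟨(↑i + 1) % n, Nat.mod_lt _ i.pos⟩ < σ i).card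

/-- The cyclic peak number: the number of indices `i` (mod `n`) with
`σ (i-1) < σ i > σ (i+1)`. -/
def cpk {n : ℕ} (σ : Fin n → Fin n) : ℕ :=
  (Finset.univ.filter fun i : Fin n =>
    σ ⟨(↑i + (n - 1)) % n, Nat.mod_lt _ i.pos⟩ < σ i ∧
    σ ⟨(↑i + 1) % n, Nat.mod_lt _ i.pos⟩ < σ i).card

/-
The patterns [1243] and [1342] are exactly the cyclic configurations of four entries in which
the smallest and the largest are not neighbours. Rotate the minimum 0 to the front. If the
maximum n - 1 stood at a position m with 1 < m < n - 1, the entries at 0, 1, m, n - 1 would form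
such a configuration, so it stands at position 1 or n - 1. The remaining arc of n - 2 entries
has no peak (it would form a configuration with the 0 in front) and no valley (with the n - 1
behind), so it is monotone. This leaves 2 × 2 representatives, and a direct check shows that
each of them avoids both patterns.
-/

def Occurs1x4y {α β : Type*} [Preorder α] [Preorder β] (f : α → β) (a b c d : α) : Prop :=
  a < b ∧ b < c ∧ c < d ∧ f a < f b ∧ f b < f c ∧ f a < f d ∧ f d < f c

def CycOccurs1x4y (n : ℕ) (T : ℕ → ℕ) : Prop :=
  ∃ a b c d, a < n ∧ d < a + n ∧ Occurs1x4y T a b c d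

section Patterns

variable {n : ℕ} {τ : Fin n → Fin n}

theorem containsPat_1243_or_1342_iff (hτ : Function.Injective τ) :
    (ContainsPat τ ![1,2,4,3] ∨ ContainsPat τ ![1,3,4,2]) ↔ ∃ a b c d, Occurs1x4y τ a b c d := by
  constructor
  · rintro (⟨f, hf, hπ⟩ | ⟨f, hf, hπ⟩) <;>
      exact ⟨f 0, f 1, f 2, f 3, hf (by decide), hf (by decide), hf (by decide),
        (hπ 0 1).mp (by decide), (hπ 1 2).mp (by decide), (hπ 0 3).mp (by decide),
        (hπ 3 2).mp (by decide)⟩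
  · rintro ⟨a, b, c, d, hab, hbc, hcd, h1, h2, h3, h4⟩
    have hf : StrictMono ![a, b, c, d] := by
      refine Fin.strictMono_iff_lt_succ.mpr fun i => ?_
      fin_cases i <;> assumption
    have hbd : τ b ≠ τ d := hτ.ne (hbc.trans hcd).ne
    rcases hbd.lt_or_gt with hbd | hdb
    · left
      refine ⟨_, hf, fun i j => ?_⟩
      fin_cases i <;> fin_cases j <;> simp <;> order
    · right
      refine ⟨_, hf, fun i j => ?_⟩
      fin_cases i <;> fin_cases j <;> simp <;> order

end Patterns

section Rotations

variable {n : ℕ} (σ : Fin n → Fin n)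

theorem rotSeq_rotSeq (r s : Fin n) : rotSeq (rotSeq σ r) s = rotSeq σ (s + r) := by
  funext i; simp [rotSeq, add_assoc]

theorem rotSeq_zero [NeZero n] : rotSeq σ 0 = σ := by
  funext i; simp [rotSeq]

theorem cycClass_rotSeq [NeZero n] (r : Fin n) : CycClass (rotSeq σ r) = CycClass σ := by
  ext τ; constructor
  · rintro ⟨s, rfl⟩; exact ⟨s + r, (rotSeq_rotSeq σ r s).symm⟩
  · rintro ⟨t, rfl⟩; exact ⟨t - r, by rw [rotSeq_rotSeq, sub_add_cancel]⟩

theorem cycContains_iff {k : ℕ} (π : Fin k → ℕ) :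
    CycContains σ π ↔ ∃ τ ∈ CycClass σ, ContainsPat τ π := by
  simp [CycContains, CycClass]

theorem cycAvoids_rotSeq_iff [NeZero n] {k : ℕ} (π : Fin k → ℕ) (r : Fin n) :
    CycAvoids (rotSeq σ r) π ↔ CycAvoids σ π := by
  simp only [CycAvoids, cycContains_iff, cycClass_rotSeq]

theorem eq_of_cycClass_eq [NeZero n] {σ' : Fin n → Fin n} (hσ : Function.Injective σ)
    (h0 : σ 0 = 0) (h0' : σ' 0 = 0) (h : CycClass σ = CycClass σ') : σ = σ' := by
  obtain ⟨r, hr⟩ : σ' ∈ CycClass σ := h ▸ ⟨0, rotSeq_zero σ'⟩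
  have hr0 : r = 0 := hσ <| by simpa [rotSeq, h0, h0'] using congrFun hr 0
  rw [← hr, hr0, rotSeq_zero]

end Rotations

section Periodize

open Fin.NatCast

variable {n : ℕ} [NeZero n] (σ : Fin n → Fin n)

def periodize (p : ℕ) : ℕ := (σ (p : Fin n)).val

theorem periodize_add_self (p : ℕ) : periodize σ (p + n) = periodize σ p := by
  simp [periodize]

theorem periodize_val (i : Fin n) : periodize σ i = σ i := by
  simp [periodize]

theorem val_rotSeq (r i : Fin n) : (rotSeq σ r i : ℕ) = periodize σ (i + r) := by
  simp [periodize, rotSeq]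

theorem cycOccurs_of_occurs_rotSeq {r a b c d : Fin n} (h : Occurs1x4y (rotSeq σ r) a b c d) :
    CycOccurs1x4y n (periodize σ) := by
  obtain ⟨hab, hbc, hcd, h1, h2, h3, h4⟩ := h
  simp only [Fin.lt_def, val_rotSeq] at *
  have hd := d.isLt
  by_cases ha : (a : ℕ) + r < n
  · exact ⟨a + r, b + r, c + r, d + r, ha, by omega, by omega, by omega, by omega,
      h1, h2, h3, h4⟩
  · have hr := r.isLt
    have hshift (i : Fin n) (hi : a ≤ i) : periodize σ (i + r) = periodize σ (i + r - n) := by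
      rw [← periodize_add_self σ (i + r - n), Nat.sub_add_cancel (by omega)]
    refine ⟨a + r - n, b + r - n, c + r - n, d + r - n, by omega, by omega, by omega, by omega,
      by omega, ?_⟩
    simpa only [← hshift _ le_rfl, ← hshift b hab.le, ← hshift c (hab.trans hbc).le,
      ← hshift d (hab.trans (hbc.trans hcd)).le] using ⟨h1, h2, h3, h4⟩

theorem occurs_rotSeq_of_cycOccurs (h : CycOccurs1x4y n (periodize σ)) :
    ∃ r a b c d, Occurs1x4y (rotSeq σ r) a b c d := by
  obtain ⟨a, b, c, d, ha, hd, hab, hbc, hcd, h1, h2, h3, h4⟩ := h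
  refine ⟨⟨a, ha⟩, ⟨0, by omega⟩, ⟨b - a, by omega⟩, ⟨c - a, by omega⟩, ⟨d - a, by omega⟩,
    ?_⟩
  simp only [Occurs1x4y, Fin.lt_def, val_rotSeq, zero_add,
    Nat.sub_add_cancel hab.le, Nat.sub_add_cancel (hab.trans hbc).le,
    Nat.sub_add_cancel (hab.trans (hbc.trans hcd)).le]
  exact ⟨by omega, by omega, by omega, h1, h2, h3, h4⟩

theorem cycAvoids_iff_not_cycOccurs (hσ : Function.Injective σ) :
    (CycAvoids σ ![1,2,4,3] ∧ CycAvoids σ ![1,3,4,2]) ↔ ¬ CycOccurs1x4y n (periodize σ) := by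
  have hrot (r : Fin n) : Function.Injective (rotSeq σ r) := hσ.comp (add_left_injective r)
  simp only [CycAvoids, CycContains, ← not_or, ← exists_or,
    containsPat_1243_or_1342_iff (hrot _)]
  exact not_congr ⟨fun ⟨_, _, _, _, _, h⟩ => cycOccurs_of_occurs_rotSeq σ h,
    occurs_rotSeq_of_cycOccurs σ⟩

end Periodize

section Monotone

variable {k : ℕ}

theorem strictMonoOn_of_noPeak {α : Type*} [LinearOrder α] {A : ℕ → α}
    (hA : Set.InjOn A (Set.Iio k))
    (hpeak : ∀ i j l, i < j → j < l → l < k → ¬ (A i < A j ∧ A l < A j)) (h01 : A 0 < A 1) :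
    StrictMonoOn A (Set.Iio k) := by
  have after {i j : ℕ} (hi : 0 < i) (hij : i < j) (hj : j < k) (h0i : A 0 < A i) : A i < A j :=
    ((hA.ne (by simp; omega) (by simp; omega) hij.ne).lt_or_gt).resolve_right
      fun hji => hpeak 0 i j hi hij hj ⟨h0i, hji⟩
  have from0 {j : ℕ} (hj0 : 0 < j) (hj : j < k) : A 0 < A j := by
    rcases (Nat.one_le_iff_ne_zero.mpr hj0.ne').eq_or_lt with rfl | h1j
    · exact h01
    · exact h01.trans (after one_pos h1j hj h01)
  intro i hi j hj hij
  rcases i.eq_zero_or_pos with rfl | hi0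
  · exact from0 hij hj
  · exact after hi0 hij hj (from0 hi0 (hij.trans hj))

theorem strictMonoOn_or_strictAntiOn_of_noPeak_of_noValley {α : Type*} [LinearOrder α]
    {A : ℕ → α} (hA : Set.InjOn A (Set.Iio k))
    (hpeak : ∀ i j l, i < j → j < l → l < k → ¬ (A i < A j ∧ A l < A j))
    (hvalley : ∀ i j l, i < j → j < l → l < k → ¬ (A j < A i ∧ A j < A l)) :
    StrictMonoOn A (Set.Iio k) ∨ StrictAntiOn A (Set.Iio k) := by
  rcases lt_trichotomy (A 0) (A 1) with h01 | h01 | h10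
  · exact .inl (strictMonoOn_of_noPeak hA hpeak h01)
  · refine .inl (Set.Subsingleton.strictMonoOn _ fun i hi j hj => ?_)
    have hk : k ≤ 1 := by
      by_contra! hk
      exact absurd (hA (by simp; omega) (by simp; omega) h01) (by decide)
    simp only [Set.mem_Iio] at hi hj
    omega
  · refine .inr (strictMonoOn_toDual_comp_iff.mp (strictMonoOn_of_noPeak ?_ ?_ h10))
    · exact OrderDual.toDual.injective.comp_injOn hA
    · exact fun i j l hij hjl hl => hvalley i j l hij hjl hl

theorem add_sub_le_of_strictMonoOn {A : ℕ → ℕ} (hA : StrictMonoOn A (Set.Iio k)) {i j : ℕ}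
    (hij : i ≤ j) (hj : j < k) : A i + (j - i) ≤ A j := by
  induction j, hij using Nat.le_induction with
  | base => simp
  | succ j hij ih =>
    have := hA (show j ∈ Set.Iio k by simp; omega) (show j + 1 ∈ Set.Iio k by simpa) (by omega)
    have := ih (by omega)
    omega

theorem eq_succ_of_strictMonoOn {A : ℕ → ℕ} (hA : StrictMonoOn A (Set.Iio k))
    (hbound : ∀ j < k, 1 ≤ A j ∧ A j ≤ k) {j : ℕ} (hj : j < k) : A j = j + 1 := by
  have := add_sub_le_of_strictMonoOn hA (Nat.zero_le j) hj
  have := add_sub_le_of_strictMonoOn hA (Nat.le_sub_one_of_lt hj) (by omega)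
  have := hbound 0 (by omega)
  have := hbound (k - 1) (by omega)
  omega

theorem eq_sub_of_strictAntiOn {A : ℕ → ℕ} (hA : StrictAntiOn A (Set.Iio k))
    (hbound : ∀ j < k, 1 ≤ A j ∧ A j ≤ k) {j : ℕ} (hj : j < k) : A j = k - j := by
  have hrev : StrictMonoOn (fun i => A (k - 1 - i)) (Set.Iio k) := by
    intro i hi i' hi' hii'
    simp only [Set.mem_Iio] at hi hi'
    exact hA (by simp; omega) (by simp; omega) (by omega)
  have := eq_succ_of_strictMonoOn hrev (fun i hi => hbound _ (by omega))
    (show k - 1 - j < k by omega)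
  rw [show k - 1 - (k - 1 - j) = j by omega] at this
  omega

end Monotone

section Words

/-- The normalized representatives, starting with the minimum 0: the first flag says whether
the maximum n - 1 comes right after it, the second whether the remaining arc increases.
In order: `0 1 2 … n-1`, `0 n-2 n-3 … 1 n-1`, `0 n-1 1 2 … n-2`, `0 n-1 n-2 … 1`. -/
def cycWord (n : ℕ) : Bool → Bool → ℕ → ℕ
  | false, true, q => q
  | false, false, q => if q = 0 ∨ q = n - 1 then q else n - 1 - q
  | true, true, q => if q = 0 then 0 else if q = 1 then n - 1 else q - 1
  | true, false, q => if q = 0 then 0 else n - q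

variable {n : ℕ} (b₁ b₂ : Bool)

theorem cycWord_lt {q : ℕ} (hq : q < n) : cycWord n b₁ b₂ q < n := by
  cases b₁ <;> cases b₂ <;> simp only [cycWord] <;> (try split_ifs) <;> omega

theorem cycWord_injOn {q q' : ℕ} (hq : q < n) (hq' : q' < n)
    (h : cycWord n b₁ b₂ q = cycWord n b₁ b₂ q') : q = q' := by
  cases b₁ <;> cases b₂ <;> simp only [cycWord] at h <;> (try split_ifs at h) <;> omega

theorem not_cycOccurs_cycWord :
    ¬ CycOccurs1x4y n (fun p => cycWord n b₁ b₂ (p % n)) := by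
  rintro ⟨a, b, c, d, ha, hd, hab, hbc, hcd, h1, h2, h3, h4⟩
  have hmod {x : ℕ} (hx : x < 2 * n) : x % n = x ∨ x % n + n = x := by
    rcases Nat.lt_or_ge x n with h | h
    · exact .inl (Nat.mod_eq_of_lt h)
    · exact .inr (by rw [Nat.mod_eq_sub_mod h, Nat.mod_eq_of_lt (by omega)]; omega)
  have := hmod (x := a) (by omega); have := hmod (x := b) (by omega)
  have := hmod (x := c) (by omega); have := hmod (x := d) (by omega)
  cases b₁ <;> cases b₂ <;> simp only [cycWord] at h1 h2 h3 h4 <;>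
    (try split_ifs at h1 h2 h3 h4) <;> omega

end Words

section Classification

variable {n : ℕ} {T : ℕ → ℕ}

theorem arc_eq_of_not_cycOccurs (hinj : ∀ p < n, ∀ q < n, T p = T q → p = q)
    (hper : ∀ p, T (p + n) = T p) (h0 : T 0 = 0) (hav : ¬ CycOccurs1x4y n T) {s M : ℕ}
    (hs : 1 ≤ s) (hs' : s ≤ 2) (hM : s + (n - 2) ≤ M) (hM' : M < n + s) (hTM : T M = n - 1)
    (hrange : ∀ j < n - 2, 1 ≤ T (s + j) ∧ T (s + j) ≤ n - 2) :
    (∀ j < n - 2, T (s + j) = j + 1) ∨ (∀ j < n - 2, T (s + j) = n - 2 - j) := by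
  -- A peak of the arc forms an occurrence with the minimum at 0 in front of it, a valley one
  -- with the maximum at M behind it.
  have hpeak (i j l : ℕ) (hij : i < j) (hjl : j < l) (hl : l < n - 2) :
      ¬ (T (s + i) < T (s + j) ∧ T (s + l) < T (s + j)) := by
    rintro ⟨h1, h2⟩
    have := hrange i (by omega); have := hrange l hl
    exact hav ⟨0, s + i, s + j, s + l, by omega, by omega, by omega, by omega, by omega,
      by omega, h1, by omega, h2⟩
  have hvalley (i j l : ℕ) (hij : i < j) (hjl : j < l) (hl : l < n - 2) :
      ¬ (T (s + j) < T (s + i) ∧ T (s + j) < T (s + l)) := by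
    rintro ⟨h1, h2⟩
    have := hrange i (by omega); have := hrange l hl
    exact hav ⟨s + j, s + l, M, s + i + n, by omega, by omega, by omega, by omega, by omega,
      h2, by omega, by rwa [hper], by rw [hper]; omega⟩
  have hinjOn : Set.InjOn (fun j => T (s + j)) (Set.Iio (n - 2)) := fun i hi j hj h => by
    simp only [Set.mem_Iio] at hi hj
    have := hinj (s + i) (by omega) (s + j) (by omega) h
    omega
  rcases strictMonoOn_or_strictAntiOn_of_noPeak_of_noValley hinjOn hpeak hvalley with h | h
  · exact .inl fun j hj => eq_succ_of_strictMonoOn h hrange hj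
  · exact .inr fun j hj => eq_sub_of_strictAntiOn h hrange hj

theorem eq_one_or_eq_sub_one_of_not_cycOccurs (hn : 4 ≤ n) (hlt : ∀ p, T p < n)
    (hinj : ∀ p < n, ∀ q < n, T p = T q → p = q) (h0 : T 0 = 0) (hav : ¬ CycOccurs1x4y n T)
    {m : ℕ} (hm : m < n) (hTm : T m = n - 1) : m = 1 ∨ m = n - 1 := by
  by_contra! h
  have : m ≠ 0 := by rintro rfl; omega
  have hne {p q : ℕ} (hp : p < n) (hq : q < n) (hpq : p ≠ q) : T p ≠ T q :=
    fun h => hpq (hinj p hp q hq h)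
  have := hne (p := 1) (q := 0) (by omega) (by omega) (by omega)
  have := hne (p := 1) (q := m) (by omega) hm (by omega)
  have := hne (p := n - 1) (q := 0) (by omega) (by omega) (by omega)
  have := hne (p := n - 1) (q := m) (by omega) hm (by omega)
  have := hlt 1; have := hlt (n - 1)
  exact hav ⟨0, 1, m, n - 1, by omega, by omega, by omega, by omega, by omega,
    by omega, by omega, by omega, by omega⟩

theorem exists_eq_cycWord_of_not_cycOccurs (hn : 4 ≤ n) (hlt : ∀ p, T p < n)
    (hinj : ∀ p < n, ∀ q < n, T p = T q → p = q) (hper : ∀ p, T (p + n) = T p) (h0 : T 0 = 0)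
    (hav : ¬ CycOccurs1x4y n T) {m : ℕ} (hm : m < n) (hTm : T m = n - 1) :
    ∃ b₁ b₂, ∀ q < n, T q = cycWord n b₁ b₂ q := by
  have hpos (p : ℕ) (hp : 0 < p) (hpn : p < n) : 1 ≤ T p := by
    by_contra! h
    exact hp.ne' (hinj p hpn 0 (by omega) (by omega))
  have hmid (p : ℕ) (hpn : p < n) (hpm : p ≠ m) : T p ≤ n - 2 := by
    have := hlt p
    by_contra! h
    exact hpm (hinj p hpn m hm (by omega))
  obtain ⟨b₁, s, M, hb₁⟩ : ∃ (b₁ : Bool) (s M : ℕ),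
      (b₁ = true ∧ m = 1 ∧ s = 2 ∧ M = n + 1) ∨ (b₁ = false ∧ m = n - 1 ∧ s = 1 ∧ M = n - 1) := by
    rcases eq_one_or_eq_sub_one_of_not_cycOccurs hn hlt hinj h0 hav hm hTm with h | h
    · exact ⟨true, 2, n + 1, .inl ⟨rfl, h, rfl, rfl⟩⟩
    · exact ⟨false, 1, n - 1, .inr ⟨rfl, h, rfl, rfl⟩⟩
  have hTM : T M = n - 1 := by
    rcases hb₁ with ⟨-, rfl, -, rfl⟩ | ⟨-, rfl, -, rfl⟩
    · rw [add_comm, hper, hTm]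
    · exact hTm
  have harc := arc_eq_of_not_cycOccurs hinj hper h0 hav (s := s) (M := M) (by omega) (by omega)
    (by omega) (by omega) hTM fun j hj =>
      ⟨hpos _ (by omega) (by omega), hmid _ (by omega) (by omega)⟩
  obtain ⟨b₂, hb₂⟩ : ∃ b₂ : Bool, ∀ j < n - 2, T (s + j) = if b₂ then j + 1 else n - 2 - j := by
    rcases harc with h | h
    · exact ⟨true, h⟩
    · exact ⟨false, h⟩
  refine ⟨b₁, b₂, fun q hq => ?_⟩
  rcases (show q = 0 ∨ q = m ∨ (s ≤ q ∧ q < s + (n - 2)) by omega) with rfl | rfl | ⟨hsq, hqs⟩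
  · cases b₁ <;> cases b₂ <;> simp [cycWord, h0]
  · rcases hb₁ with ⟨rfl, rfl, -⟩ | ⟨rfl, rfl, -⟩ <;> cases b₂ <;> simp [cycWord, hTm]
  · have := hb₂ (q - s) (by omega)
    rw [Nat.add_sub_cancel' hsq] at this
    rcases hb₁ with ⟨rfl, rfl, rfl, -⟩ | ⟨rfl, rfl, rfl, -⟩ <;> cases b₂ <;>
      simp only [cycWord, if_true, if_false, Bool.false_eq_true] at this ⊢ <;>
      (try split_ifs) <;> omega

end Classification

section Representatives

def cycWordFin (n : ℕ) (b₁ b₂ : Bool) : Fin n → Fin n :=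
  fun i => ⟨cycWord n b₁ b₂ i, cycWord_lt b₁ b₂ i.isLt⟩

variable {n : ℕ}

theorem cycWordFin_injective (b₁ b₂ : Bool) : Function.Injective (cycWordFin n b₁ b₂) :=
  fun i j h => Fin.ext (cycWord_injOn b₁ b₂ i.isLt j.isLt (congrArg Fin.val h))

theorem cycWordFin_zero [NeZero n] (b₁ b₂ : Bool) : cycWordFin n b₁ b₂ 0 = 0 := by
  ext; cases b₁ <;> cases b₂ <;> simp [cycWordFin, cycWord]

theorem cycAvoids_cycWordFin [NeZero n] (b₁ b₂ : Bool) :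
    CycAvoids (cycWordFin n b₁ b₂) ![1,2,4,3] ∧ CycAvoids (cycWordFin n b₁ b₂) ![1,3,4,2] := by
  have hT : periodize (cycWordFin n b₁ b₂) = fun p => cycWord n b₁ b₂ (p % n) := by
    funext p; simp [periodize, cycWordFin]
  rw [cycAvoids_iff_not_cycOccurs _ (cycWordFin_injective b₁ b₂), hT]
  exact not_cycOccurs_cycWord b₁ b₂

theorem injective_cycClass_cycWordFin (hn : 4 ≤ n) :
    Function.Injective fun b : Bool × Bool => CycClass (cycWordFin n b.1 b.2) := by
  obtain ⟨k, rfl⟩ : ∃ k, n = k + 4 := ⟨n - 4, by omega⟩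
  rintro ⟨b₁, b₂⟩ ⟨c₁, c₂⟩ h
  have h' := eq_of_cycClass_eq _ (cycWordFin_injective b₁ b₂) (cycWordFin_zero b₁ b₂)
    (cycWordFin_zero c₁ c₂) h
  have h1 := congrArg Fin.val (congrFun h' 1)
  have h2 := congrArg Fin.val (congrFun h' 2)
  cases b₁ <;> cases b₂ <;> cases c₁ <;> cases c₂ <;>
    simp [cycWordFin, cycWord, Nat.mod_eq_of_lt (show 2 < k + 4 by omega)] at h1 h2 ⊢

theorem eq_cycWordFin_of_cycAvoids [NeZero n] (hn : 4 ≤ n) {τ : Fin n → Fin n}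
    (hτ : Function.Injective τ) (h0 : τ 0 = 0)
    (hav : CycAvoids τ ![1,2,4,3] ∧ CycAvoids τ ![1,3,4,2]) :
    ∃ b₁ b₂, τ = cycWordFin n b₁ b₂ := by
  obtain ⟨m, hm⟩ := (Finite.injective_iff_bijective.mp hτ).2 ⟨n - 1, by omega⟩
  have hinj (p : ℕ) (hp : p < n) (q : ℕ) (hq : q < n) (h : periodize τ p = periodize τ q) :
      p = q := by
    simpa [Nat.mod_eq_of_lt hp, Nat.mod_eq_of_lt hq] using congrArg Fin.val (hτ (Fin.ext h))
  obtain ⟨b₁, b₂, h⟩ := exists_eq_cycWord_of_not_cycOccurs (T := periodize τ) hn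
    (fun p => (τ _).isLt) hinj (periodize_add_self τ) (by simp [periodize, h0])
    ((cycAvoids_iff_not_cycOccurs τ hτ).mp hav) m.isLt (by rw [periodize_val, hm])
  exact ⟨b₁, b₂, funext fun i => Fin.ext (by rw [← periodize_val, h i i.isLt]; rfl)⟩

theorem avClasses_1243_1342_eq_range (hn : 4 ≤ n) :
    AvClasses n (fun σ => CycAvoids σ ![1,2,4,3] ∧ CycAvoids σ ![1,3,4,2]) =
      Set.range fun b : Bool × Bool => CycClass (cycWordFin n b.1 b.2) := by
  have : NeZero n := ⟨by omega⟩
  ext C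
  constructor
  · rintro ⟨σ, rfl, hσ⟩
    obtain ⟨b₁, b₂, h⟩ := eq_cycWordFin_of_cycAvoids hn (τ := rotSeq σ (σ.symm 0))
      (σ.injective.comp (add_left_injective _)) (by simp [rotSeq])
      (by simpa only [cycAvoids_rotSeq_iff] using hσ)
    exact ⟨(b₁, b₂), (congrArg CycClass h).symm.trans (cycClass_rotSeq _ _)⟩
  · rintro ⟨⟨b₁, b₂⟩, rfl⟩
    exact ⟨Equiv.ofBijective _ (Finite.injective_iff_bijective.mp (cycWordFin_injective b₁ b₂)),
      rfl, cycAvoids_cycWordFin b₁ b₂⟩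

end Representatives

theorem card_av_1243_1342 (n : ℕ) (hn : 4 ≤ n) :
    (AvClasses n fun σ => CycAvoids σ ![1,2,4,3] ∧ CycAvoids σ ![1,3,4,2]).ncard = 4 := by
  rw [avClasses_1243_1342_eq_range hn,
    Set.ncard_range_of_injective (injective_cycClass_cycWordFin hn)]
  simp
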